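/- arXiv:2303.17426 — 3 statements merged into one kernel-verified Lean document; each statement's English description precedes it below -/
import Mathlib

section
/- Correctness of the level-2 recursive Bernstein–Vazirani algorithm: let t : V be the secret string, σ : V → V a family (x₁ ↦ s_{x₁}), and g : V → ZMod 2 a function satisfying g (σ x) = t ⬝ x for all x : V. Let W : Matrix V V ℂ be given by W u x = (-1)^(u ⬝ x) / Real.sqrt (2^n); let D : Matrix (V × V) (V × V) ℂ be the diagonal oracle phase matrix with diagonal entry (-1)^(σ x₁ ⬝ x₂) at (x₁, x₂); and let G : Matrix (V × V) (V × V) ℂ be the diagonal matrix with diagonal entry (-1)^(g x₂) at (x₁, x₂). Let e₀ : V × V → ℂ be the standard basis vector at the all-zeros pair. Then the final state ψ := (W ⊗ 1) * D * (1 ⊗ W) * G * (1 ⊗ W) * D * (W ⊗ W) applied to e₀ (where ⊗ is the Kronecker product of matrices) satisfies ψ (y₁, y₂) = (if y₁ = t then 1 else 0) / Real.sqrt (2^n) for all y₁ y₂ : V; i.e., measuring the first register yields t with probability 1. -/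
open Matrix Kronecker

noncomputable def walshHadamard (n : ℕ) :
    Matrix (Fin n → ZMod 2) (Fin n → ZMod 2) ℂ :=
  fun u x => (-1 : ℂ) ^ (∑ i, u i * x i : ZMod 2).val / Real.sqrt (2 ^ n)

/-- The diagonal oracle phase matrix `D` with entry `(-1)^(σ x₁ ⬝ x₂)` at `(x₁, x₂)`. -/
noncomputable def oracleD (n : ℕ) (σ : (Fin n → ZMod 2) → (Fin n → ZMod 2)) :
    Matrix ((Fin n → ZMod 2) × (Fin n → ZMod 2))
      ((Fin n → ZMod 2) × (Fin n → ZMod 2)) ℂ :=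
  Matrix.diagonal fun p => (-1 : ℂ) ^ (∑ i, σ p.1 i * p.2 i : ZMod 2).val

/-- The diagonal matrix `G` with entry `(-1)^(g x₂)` at `(x₁, x₂)`. -/
noncomputable def oracleG (n : ℕ) (g : (Fin n → ZMod 2) → ZMod 2) :
    Matrix ((Fin n → ZMod 2) × (Fin n → ZMod 2))
      ((Fin n → ZMod 2) × (Fin n → ZMod 2)) ℂ :=
  Matrix.diagonal fun p => (-1 : ℂ) ^ (g p.2).val

/-!
The middle block `D (1 ⊗ W) G (1 ⊗ W) D` is a level-1 Bernstein–Vazirani run on the second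
register with secret `σ x₁`: the uniform state is sent by `D` to the character of `σ x₁`, by `W` to
the basis vector at `σ x₁`, which `G` multiplies by `(-1)^(g (σ x₁)) = (-1)^(t ⬝ x₁)`, and `W`, `D`
undo the first two steps. So on states that are uniform in the second register the block acts as
the phase oracle of `t` on the first register, and the outer `W` turns that character into the
basis vector at `t`.
-/

noncomputable def signChar : AddChar (ZMod 2) ℂ :=
  AddChar.zmodChar 2 (by norm_num : (-1 : ℂ) ^ 2 = 1)

lemma signChar_mul_self (b : ZMod 2) : signChar b * signChar b = 1 := by
  rw [← AddChar.map_add_eq_mul, CharTwo.add_self_eq_zero, AddChar.map_zero_eq_one]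

section DotProduct

variable {ι : Type*} [Fintype ι] [DecidableEq ι]

lemma sum_signChar_dotProduct (s : ι → ZMod 2) :
    ∑ x, signChar (s ⬝ᵥ x) = if s = 0 then 2 ^ Fintype.card ι else 0 := by
  let ψ := signChar.compAddMonoidHom (dotProductBilin (ZMod 2) (ZMod 2) s).toAddMonoidHom
  have hψ : ψ = 0 ↔ s = 0 := by
    refine ⟨fun h => by_contra fun hs => ?_, fun h => by ext x; simp [ψ, h]⟩
    obtain ⟨i, hi⟩ := Function.ne_iff.mp hs
    have hsi : s i = 1 := (by decide : ∀ b : ZMod 2, b ≠ 0 → b = 1) _ hi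
    have hψi : ψ (Pi.single i 1) = -1 := by
      change (-1 : ℂ) ^ (s ⬝ᵥ Pi.single i 1).val = -1
      simp [hsi, ZMod.val_one]
    rw [h] at hψi
    norm_num at hψi
  calc ∑ x, signChar (s ⬝ᵥ x) = ∑ x, ψ x := rfl
    _ = _ := by rw [AddChar.sum_eq_ite]; simp [hψ]

lemma sum_signChar_dotProduct_mul (u s : ι → ZMod 2) :
    ∑ x, signChar (u ⬝ᵥ x) * signChar (s ⬝ᵥ x) = if u = s then 2 ^ Fintype.card ι else 0 := by
  have h : ∀ x, signChar (u ⬝ᵥ x) * signChar (s ⬝ᵥ x) = signChar ((u - s) ⬝ᵥ x) := fun x => by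
    rw [sub_dotProduct, sub_eq_add_neg, AddChar.map_add_eq_mul, ZMod.neg_eq_self_mod_two]
  simp only [h, sum_signChar_dotProduct, sub_eq_zero]

end DotProduct

section Kronecker

variable {l m n p R : Type*} [Fintype m] [Fintype p] [NonAssocSemiring R]

lemma one_kronecker_mulVec_apply [Fintype l] [DecidableEq l] (M : Matrix n p R)
    (v : l × p → R) (i : l) (j : n) :
    (((1 : Matrix l l R) ⊗ₖ M) *ᵥ v) (i, j) = (M *ᵥ fun k => v (i, k)) j := by
  simp [mulVec, dotProduct, Fintype.sum_prod_type, one_apply, ite_mul, Finset.sum_ite_eq]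

lemma kronecker_one_mulVec_apply [Fintype n] [DecidableEq n] (M : Matrix l m R)
    (v : m × n → R) (i : l) (j : n) :
    ((M ⊗ₖ (1 : Matrix n n R)) *ᵥ v) (i, j) = (M *ᵥ fun k => v (k, j)) i := by
  simp [mulVec, dotProduct, Fintype.sum_prod_type, one_apply, mul_ite, Finset.sum_ite_eq]

lemma kronecker_mulVec_single_one [DecidableEq m] [DecidableEq p] (A : Matrix l m R)
    (B : Matrix n p R) (i : m) (j : p) :
    (A ⊗ₖ B) *ᵥ Pi.single (i, j) 1 = fun q => A q.1 i * B q.2 j := by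
  rw [mulVec_single_one]
  rfl

end Kronecker

section WalshHadamard

variable {n : ℕ}

lemma walshHadamard_apply (u x : Fin n → ZMod 2) :
    walshHadamard n u x = signChar (u ⬝ᵥ x) / √(2 ^ n) := rfl

lemma sqrt_two_pow_mul_self (n : ℕ) : (√(2 ^ n) : ℂ) * √(2 ^ n) = 2 ^ n := by
  rw [← Complex.ofReal_mul, Real.mul_self_sqrt (by positivity)]
  push_cast
  rfl

lemma walshHadamard_mulVec_signChar (s : Fin n → ZMod 2) (a : ℂ) :
    walshHadamard n *ᵥ (fun x => signChar (s ⬝ᵥ x) * a) = Pi.single s (√(2 ^ n) * a) := by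
  ext u
  rw [Pi.single_apply]
  calc (walshHadamard n *ᵥ fun x => signChar (s ⬝ᵥ x) * a) u
      = (∑ x, signChar (u ⬝ᵥ x) * signChar (s ⬝ᵥ x)) * a / √(2 ^ n) := by
        simp only [mulVec, dotProduct, walshHadamard_apply, Finset.sum_mul, Finset.sum_div]
        exact Finset.sum_congr rfl fun x _ => by ring
    _ = if u = s then √(2 ^ n) * a else 0 := by
        rw [sum_signChar_dotProduct_mul, Fintype.card_fin, ← sqrt_two_pow_mul_self]
        split_ifs
        · field_simp
        · simp

lemma walshHadamard_phase_kickback (s : Fin n → ZMod 2) (f : (Fin n → ZMod 2) → ZMod 2)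
    (a : ℂ) (x : Fin n → ZMod 2) :
    signChar (s ⬝ᵥ x) * (walshHadamard n *ᵥ fun y => signChar (f y) *
        (walshHadamard n *ᵥ fun z => signChar (s ⬝ᵥ z) * a) y) x = signChar (f s) * a := by
  have hδ : (fun y => signChar (f y) * (Pi.single s (√(2 ^ n) * a) : _ → ℂ) y) =
      Pi.single s (signChar (f s) * (√(2 ^ n) * a)) := by
    ext y
    by_cases hy : y = s <;> simp [hy]
  rw [walshHadamard_mulVec_signChar, hδ, mulVec_single]
  simp only [Pi.smul_apply, col_apply, walshHadamard_apply, MulOpposite.smul_eq_mul_unop,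
    MulOpposite.unop_op]
  rw [dotProduct_comm x s]
  field_simp
  rw [sq, signChar_mul_self, one_mul]

end WalshHadamard

lemma oracle_block_mulVec {n : ℕ} {t : Fin n → ZMod 2} {σ : (Fin n → ZMod 2) → (Fin n → ZMod 2)}
    {g : (Fin n → ZMod 2) → ZMod 2} (hg : ∀ x, g (σ x) = t ⬝ᵥ x)
    (f : (Fin n → ZMod 2) → ℂ) :
    oracleD n σ *ᵥ ((1 ⊗ₖ walshHadamard n) *ᵥ (oracleG n g *ᵥ ((1 ⊗ₖ walshHadamard n) *ᵥ
      (oracleD n σ *ᵥ fun p => f p.1)))) = fun p => signChar (t ⬝ᵥ p.1) * f p.1 := by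
  ext ⟨x₁, x₂⟩
  simp only [oracleD, oracleG, mulVec_diagonal, one_kronecker_mulVec_apply]
  rw [← hg]
  exact walshHadamard_phase_kickback (σ x₁) g (f x₁) x₂

theorem recursive_bv_level2_correct (n : ℕ) (t : Fin n → ZMod 2)
    (σ : (Fin n → ZMod 2) → (Fin n → ZMod 2))
    (g : (Fin n → ZMod 2) → ZMod 2)
    (hg : ∀ x : Fin n → ZMod 2, g (σ x) = ∑ i, t i * x i)
    (e₀ : (Fin n → ZMod 2) × (Fin n → ZMod 2) → ℂ)
    (he₀ : e₀ = fun p => if p = ((0 : Fin n → ZMod 2), (0 : Fin n → ZMod 2)) then 1 else 0)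
    (y₁ y₂ : Fin n → ZMod 2) :
    ((walshHadamard n ⊗ₖ (1 : Matrix (Fin n → ZMod 2) (Fin n → ZMod 2) ℂ)) *
        oracleD n σ *
        ((1 : Matrix (Fin n → ZMod 2) (Fin n → ZMod 2) ℂ) ⊗ₖ walshHadamard n) *
        oracleG n g *
        ((1 : Matrix (Fin n → ZMod 2) (Fin n → ZMod 2) ℂ) ⊗ₖ walshHadamard n) *
        oracleD n σ *
        (walshHadamard n ⊗ₖ walshHadamard n)).mulVec e₀ (y₁, y₂)
      = (if y₁ = t then 1 else 0) / Real.sqrt (2 ^ n) := by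
  have he₀' : e₀ = Pi.single (0, 0) 1 := by
    rw [he₀]
    exact funext fun p => (Pi.single_apply _ _ p).symm
  have h_uniform : (walshHadamard n ⊗ₖ walshHadamard n) *ᵥ e₀ =
      fun _ => (√(2 ^ n) : ℂ)⁻¹ * (√(2 ^ n) : ℂ)⁻¹ := by
    rw [he₀', kronecker_mulVec_single_one]
    ext p
    simp [walshHadamard_apply]
  simp only [← mulVec_mulVec, h_uniform]
  rw [oracle_block_mulVec hg fun _ => (√(2 ^ n) : ℂ)⁻¹ * (√(2 ^ n) : ℂ)⁻¹,
    kronecker_one_mulVec_apply, walshHadamard_mulVec_signChar,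
    Pi.single_apply]
  split_ifs
  · field_simp
  · simp
end

section
/- (Core of Lemma 4.) Let s : V have even Hamming weight |s|. Then for all x : V, s ⬝ (s ∧ x̄) = s ⬝ x, where x̄ is the bitwise complement of x defined by x̄ i := 1 + x i in ZMod 2. Consequently, the negated-control choice s_{x₁} := s ∧ x̄₁ together with g(v) := s ⬝ v satisfies g(s_{x₁}) = s ⬝ x₁ for every x₁ : V. -/
theorem bv_lemma4_core (n : ℕ) (s : Fin n → ZMod 2)
    (hs : Even (Finset.univ.filter fun i => s i = 1).card) :
    (∀ x : Fin n → ZMod 2,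
        (∑ i, s i * (fun j => s j * (1 + x j)) i) = ∑ i, s i * x i) ∧
    (∀ x₁ : Fin n → ZMod 2,
        (fun v : Fin n → ZMod 2 => ∑ i, s i * v i) (fun j => s j * (1 + x₁ j))
          = ∑ i, s i * x₁ i) := by
  have hsum0 : ∑ i, s i = 0 := by
    have : ∑ i, s i = ∑ i, (if s i = 1 then (1 : ZMod 2) else 0) := by
      apply Finset.sum_congr rfl
      intro i _
      rcases (by decide : ∀ a : ZMod 2, a = 0 ∨ a = 1) (s i) with h | h <;> simp [h]
    rw [this, Finset.sum_boole]
    have : ((Finset.univ.filter fun i => s i = 1).card : ZMod 2) = 0 :=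
      (ZMod.natCast_eq_zero_iff _ 2).mpr hs.two_dvd
    simpa using this
  have key : ∀ x : Fin n → ZMod 2,
      (∑ i, s i * (fun j => s j * (1 + x j)) i) = ∑ i, s i * x i := by
    intro x
    have hsq : ∀ a : ZMod 2, a * a = a := by decide
    calc (∑ i, s i * (s i * (1 + x i))) = ∑ i, (s i + s i * x i) := by
          apply Finset.sum_congr rfl; intro i _
          rw [← mul_assoc, hsq]; ring
      _ = (∑ i, s i) + ∑ i, s i * x i := Finset.sum_add_distrib
      _ = ∑ i, s i * x i := by rw [hsum0, zero_add]
  exact ⟨key, key⟩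
end

section
/- (Exponential lower bound on nonzero oracle entries.) Let n ≥ 1, let s : V be nonzero, let g : V → ZMod 2 satisfy g 0 = 0, and let σ : V → V be any family satisfying the recursive Bernstein–Vazirani condition g (σ x) = s ⬝ x for all x : V. Then the number of x : V with σ x ≠ 0 is at least 2^(n−1). (This is the counting fact behind the claim that a generic level-2 oracle needs at least 2^(n−1) multi-controlled CNOT gates.) -/
/-!
Every `x` with `s ⬝ᵥ x = 1` has `σ x ≠ 0`, since `σ x = 0` would force `s ⬝ᵥ x = g 0 = 0`.
For `s ≠ 0` the functional `x ↦ s ⬝ᵥ x` is onto `ZMod 2`, so its fibres are cosets of its kernel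
and the fibre over `1` is half of the `2 ^ n` strings.
-/

open Finset

theorem AddMonoidHom.card_fiber_mul_card_of_surjective {G H F : Type*} [AddGroup G] [Fintype G]
    [AddMonoid H] [Fintype H] [DecidableEq H] [FunLike F G H] [AddMonoidHomClass F G H]
    (f : F) (hf : Function.Surjective f) (y : H) :
    #{g | f g = y} * Fintype.card H = Fintype.card G := by
  calc #{g | f g = y} * Fintype.card H = ∑ z, #{g | f g = z} := by
        rw [sum_congr rfl fun z _ => card_fiber_eq_of_mem_range f (hf z) (hf y), sum_const,
          card_univ, smul_eq_mul, mul_comm]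
    _ = Fintype.card G := (card_eq_sum_card_fiberwise fun _ _ => mem_coe.2 (mem_univ _)).symm

theorem dotProduct_surjective {ι K : Type*} [Fintype ι] [DecidableEq ι] [DivisionRing K]
    {s : ι → K} (hs : s ≠ 0) : Function.Surjective (s ⬝ᵥ ·) := by
  obtain ⟨j, hj⟩ := Function.ne_iff.mp hs
  intro y
  refine ⟨Pi.single j ((s j)⁻¹ * y), ?_⟩
  simp [dotProduct_single, ← mul_assoc, mul_inv_cancel₀ hj]

theorem card_dotProduct_fiber_mul_card {ι K : Type*} [Fintype ι] [DecidableEq ι] [Field K]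
    [Fintype K] [DecidableEq K] {s : ι → K} (hs : s ≠ 0) (y : K) :
    #{x | s ⬝ᵥ x = y} * Fintype.card K = Fintype.card K ^ Fintype.card ι := by
  rw [← Fintype.card_fun]
  exact AddMonoidHom.card_fiber_mul_card_of_surjective (dotProductEquiv K ι s)
    (dotProduct_surjective hs) y

theorem bv_exponential_nonzero_entries_general (n : ℕ)
    (s : Fin n → ZMod 2) (hs : s ≠ 0)
    (g : (Fin n → ZMod 2) → ZMod 2) (hg0 : g 0 = 0)
    (σ : (Fin n → ZMod 2) → (Fin n → ZMod 2))
    (hσ : ∀ x : Fin n → ZMod 2, g (σ x) = ∑ i, s i * x i) :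
    2 ^ (n - 1) ≤ (Finset.univ.filter fun x : Fin n → ZMod 2 => σ x ≠ 0).card := by
  have hsub : ({x | s ⬝ᵥ x = 1} : Finset _) ⊆ ({x | σ x ≠ 0} : Finset _) := by
    intro x hx
    simp only [mem_filter, mem_univ, true_and] at hx ⊢
    intro hσx
    have hdot := hσ x
    rw [hσx, hg0] at hdot
    exact zero_ne_one (hdot.trans hx)
  have hfiber : #{x | s ⬝ᵥ x = 1} * 2 = 2 ^ n := by
    simpa using card_dotProduct_fiber_mul_card hs 1
  refine le_trans ?_ (card_le_card hsub)
  cases n with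
  | zero => omega
  | succ m => rw [pow_succ] at hfiber; simpa using hfiber.ge

theorem bv_exponential_nonzero_entries (n : ℕ) (hn : 1 ≤ n)
    (s : Fin n → ZMod 2) (hs : s ≠ 0)
    (g : (Fin n → ZMod 2) → ZMod 2) (hg0 : g 0 = 0)
    (σ : (Fin n → ZMod 2) → (Fin n → ZMod 2))
    (hσ : ∀ x : Fin n → ZMod 2, g (σ x) = ∑ i, s i * x i) :
    2 ^ (n - 1) ≤ (Finset.univ.filter fun x : Fin n → ZMod 2 => σ x ≠ 0).card :=
  bv_exponential_nonzero_entries_general n s hs g hg0 σ hσ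
end
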